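/- Let G be a connected MS-graph without saddles. Two integer framings f and f' of G are equivalent if and only if the sum of the framings of all edges under f equals the sum of the framings of all edges under f', i.e., Σ_{e ∈ E} f(e) = Σ_{e ∈ E} f'(e). -/
import Mathlib


/-- A directed multigraph with finite vertex and edge sets. -/
structure MSGraph where
  V : Type
  E : Type
  [fintV : Fintype V]
  [decV : DecidableEq V]
  [fintE : Fintype E]
  [decE : DecidableEq E]
  src : E → V
  tgt : E → V

namespace MSGraph

attribute [instance] fintV decV fintE decE

/-- A vertex is a source if it is the terminal vertex of no edge. -/
def IsSource (G : MSGraph) (v : G.V) : Prop := ∀ e, G.tgt e ≠ v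

/-- A vertex is a sink if it is the initial vertex of no edge. -/
def IsSink (G : MSGraph) (v : G.V) : Prop := ∀ e, G.src e ≠ v

/-- A saddle is a vertex that is neither a source nor a sink. -/
def IsSaddle (G : MSGraph) (v : G.V) : Prop := ¬ G.IsSource v ∧ ¬ G.IsSink v

/-- MS-graph condition: for every edge, at least one endpoint is a source or a sink. -/
def IsMS (G : MSGraph) : Prop :=
  ∀ e, (G.IsSource (G.src e) ∨ G.IsSink (G.src e)) ∨
       (G.IsSource (G.tgt e) ∨ G.IsSink (G.tgt e))

/-- Two distinct edges are sequential if the terminal vertex of one is the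
initial vertex of the other. -/
def Sequential (G : MSGraph) (e e' : G.E) : Prop :=
  e ≠ e' ∧ (G.tgt e = G.src e' ∨ G.tgt e' = G.src e)

/-- Two distinct edges are incident if they share an endpoint. -/
def Incident (G : MSGraph) (e e' : G.E) : Prop :=
  e ≠ e' ∧ (G.src e = G.src e' ∨ G.src e = G.tgt e' ∨
            G.tgt e = G.src e' ∨ G.tgt e = G.tgt e')

/-- Adjacency in the underlying undirected graph. -/
def Adj (G : MSGraph) (v w : G.V) : Prop :=
  ∃ e, (G.src e = v ∧ G.tgt e = w) ∨ (G.src e = w ∧ G.tgt e = v)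

/-- The underlying undirected graph is connected. -/
def Connected (G : MSGraph) : Prop :=
  Nonempty G.V ∧ ∀ v w : G.V, Relation.ReflTransGen G.Adj v w

/-- One elementary operation on framings: (1) add an integer `k` to the framings of two
sequential edges; (2) add `k` to the framing of one edge and `-k` to the framing of an
incident edge that is not sequential with it.  (In `WithTop ℤ` one has `⊤ + k = ⊤`.) -/
def Step (G : MSGraph) (f f' : G.E → WithTop ℤ) : Prop :=
  (∃ (k : ℤ) (e e' : G.E), G.Sequential e e' ∧
    f' = fun x => if x = e ∨ x = e' then f x + (k : WithTop ℤ) else f x) ∨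
  (∃ (k : ℤ) (e e' : G.E), G.Incident e e' ∧ ¬ G.Sequential e e' ∧
    f' = fun x => if x = e then f x + (k : WithTop ℤ)
          else if x = e' then f x + ((-k : ℤ) : WithTop ℤ) else f x)

/-- Two framings are equivalent if one is obtained from the other by a finite
sequence of elementary operations. -/
def FramingEquiv (G : MSGraph) (f f' : G.E → WithTop ℤ) : Prop :=
  Relation.ReflTransGen G.Step f f'

/-- The edge `e` joins `v` and `w` in the underlying undirected graph. -/
def EdgeJoins (G : MSGraph) (e : G.E) (v w : G.V) : Prop :=
  (G.src e = v ∧ G.tgt e = w) ∨ (G.src e = w ∧ G.tgt e = v)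

/-- A closed walk in the underlying undirected graph: a cyclically ordered sequence of
edges `e₁, …, e_m` and vertices `v₁, …, v_m` such that `e_i` joins `v_i` to `v_{i+1}`. -/
structure ClosedWalk (G : MSGraph) where
  m : ℕ
  pos : 0 < m
  vert : ZMod m → G.V
  edge : ZMod m → G.E
  joins : ∀ i, G.EdgeJoins (edge i) (vert i) (vert (i + 1))

/-- A saddle passage of a closed walk at index `i`: of the two walk edges meeting at the
common vertex `v_{i+1}`, one is directed into it and the other is directed out of it. -/
def ClosedWalk.SaddleAt {G : MSGraph} (w : G.ClosedWalk) (i : ZMod w.m) : Prop :=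
  (G.tgt (w.edge i) = w.vert (i + 1) ∧ G.src (w.edge (i + 1)) = w.vert (i + 1)) ∨
  (G.src (w.edge i) = w.vert (i + 1) ∧ G.tgt (w.edge (i + 1)) = w.vert (i + 1))

/-- A cycle is a closed walk with no repeated edges and no repeated vertices. -/
def ClosedWalk.IsCycle {G : MSGraph} (w : G.ClosedWalk) : Prop :=
  Function.Injective w.edge ∧ Function.Injective w.vert

/-- The number of saddle passages of a closed walk. -/
noncomputable def ClosedWalk.saddleCount {G : MSGraph} (w : G.ClosedWalk) : ℕ :=
  Nat.card {i : ZMod w.m // w.SaddleAt i}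

/-- A partition of the edge set into two groups such that sequential edges lie in distinct
groups and incident non-sequential edges lie in the same group. -/
def IsGroupPartition (G : MSGraph) (g : G.E → Bool) : Prop :=
  (∀ e e', G.Sequential e e' → g e ≠ g e') ∧
  (∀ e e', G.Incident e e' → ¬ G.Sequential e e' → g e = g e')

end MSGraph

namespace MSGraph
-- AUX from here
variable {G : MSGraph}

lemma no_seq (hns : ∀ v : G.V, ¬ G.IsSaddle v) (e e' : G.E) : ¬ G.Sequential e e' := by
  rintro ⟨hne, h | h⟩
  · exact hns (G.src e') ⟨fun hs => hs e h, fun hk => hk e' rfl⟩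
  · exact hns (G.src e) ⟨fun hs => hs e' h, fun hk => hk e rfl⟩

/-- transfer k from e' to e (add k at e, subtract k at e') -/
def Tr (e e' : G.E) (k : ℤ) (f : G.E → WithTop ℤ) : G.E → WithTop ℤ :=
  fun x => if x = e then f x + (k : WithTop ℤ)
    else if x = e' then f x + ((-k : ℤ) : WithTop ℤ) else f x

lemma step_tr (hns : ∀ v : G.V, ¬ G.IsSaddle v) {e e' : G.E} (h : G.Incident e e')
    (k : ℤ) (f : G.E → WithTop ℤ) : G.Step f (G.Tr e e' k f) :=
  Or.inr ⟨k, e, e', h, no_seq hns e e', rfl⟩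

lemma coe_cancel (x : WithTop ℤ) (k : ℤ) : x + (k : WithTop ℤ) + ((-k : ℤ) : WithTop ℤ) = x := by
  rw [add_assoc, ← WithTop.coe_add, add_neg_cancel, WithTop.coe_zero, add_zero]

def T (e e' : G.E) (k : ℤ) (f : G.E → WithTop ℤ) : G.E → WithTop ℤ :=
  if e = e' then f else G.Tr e e' k f

lemma incident_symm {e e' : G.E} (h : G.Incident e e') : G.Incident e' e := by
  obtain ⟨hne, h⟩ := h
  exact ⟨hne.symm, by tauto⟩

lemma coe_cancel' (x : WithTop ℤ) (k : ℤ) : x + ((-k : ℤ) : WithTop ℤ) + (k : WithTop ℤ) = x := by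
  rw [add_assoc, ← WithTop.coe_add, neg_add_cancel, WithTop.coe_zero, add_zero]

lemma equiv_T (hns : ∀ v : G.V, ¬ G.IsSaddle v) {a b : G.E}
    (h : Relation.ReflTransGen (fun x y => x = y ∨ G.Incident x y) a b)
    (k : ℤ) (f : G.E → WithTop ℤ) :
    G.FramingEquiv f (G.T a b k f) := by
  induction h with
  | refl => simp only [T, if_pos rfl]; exact Relation.ReflTransGen.refl
  | @tail b' b hab' hb'b ih =>
    rcases hb'b with rfl | hinc
    · exact ih
    have hb'b : b' ≠ b := hinc.1
    by_cases hab : a = b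
    · subst hab
      rw [T, if_pos rfl]
      exact Relation.ReflTransGen.refl
    rw [T, if_neg hab]
    by_cases hab' : a = b'
    · subst hab'
      simp only [T, if_pos rfl] at ih
      exact ih.tail (step_tr hns hinc k f)
    · rw [T, if_neg hab'] at ih
      have hkey : G.Tr b' b k (G.Tr a b' k f) = G.Tr a b k f := by
        funext x
        simp only [Tr]
        by_cases hx1 : x = a
        · subst hx1
          simp [hab', hab, Ne.symm]
        · by_cases hx2 : x = b'
          · subst hx2
            have hba : x ≠ a := fun h => hab' h.symm
            simp [hba, hb'b]
          · by_cases hx3 : x = b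
            · subst hx3
              simp [hx1, hx2]
            · simp [hx1, hx2, hx3]
      have := ih.tail (step_tr hns hinc k (G.Tr a b' k f))
      rwa [hkey] at this

lemma inc_of_shared {a b : G.E} {v : G.V} (ha : G.src a = v ∨ G.tgt a = v)
    (hb : G.src b = v ∨ G.tgt b = v) :
    Relation.ReflTransGen (fun x y => x = y ∨ G.Incident x y) a b := by
  by_cases hab : a = b
  · exact hab ▸ Relation.ReflTransGen.refl
  · refine Relation.ReflTransGen.single (Or.inr ⟨hab, ?_⟩)
    rcases ha with ha|ha <;> rcases hb with hb|hb <;> rw [ha, hb] <;> tauto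

lemma edge_conn (hconn : G.Connected) (a b : G.E) :
    Relation.ReflTransGen (fun x y => x = y ∨ G.Incident x y) a b := by
  have key : ∀ v w : G.V, Relation.ReflTransGen G.Adj v w →
      ∀ a b : G.E, (G.src a = v ∨ G.tgt a = v) → (G.src b = w ∨ G.tgt b = w) →
      Relation.ReflTransGen (fun x y => x = y ∨ G.Incident x y) a b := by
    intro v w h
    induction h with
    | refl => intro a b ha hb; exact inc_of_shared ha hb
    | @tail u w h hadj ih =>
      intro a b ha hb
      obtain ⟨c, hc⟩ := hadj
      rcases hc with ⟨h1, h2⟩ | ⟨h1, h2⟩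
      · exact (ih a c ha (Or.inl h1)).trans (inc_of_shared (Or.inr h2) hb)
      · exact (ih a c ha (Or.inr h2)).trans (inc_of_shared (Or.inl h1) hb)
  exact key _ _ (hconn.2 (G.src a) (G.src b)) a b (Or.inl rfl) (Or.inl rfl)

lemma step_sum (hns : ∀ v : G.V, ¬ G.IsSaddle v) {f f' : G.E → WithTop ℤ}
    (h : G.Step f f') : ∑ e, f' e = ∑ e, f e := by
  rcases h with ⟨k, e, e', hseq, _⟩ | ⟨k, e, e', hinc, _, rfl⟩
  · exact absurd hseq (no_seq hns e e')
  · have hne : e ≠ e' := hinc.1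
    have hpt : ∀ x : G.E, (if x = e then f x + (k : WithTop ℤ)
          else if x = e' then f x + ((-k : ℤ) : WithTop ℤ) else f x)
        = f x + ((if x = e then ((k : ℤ) : WithTop ℤ) else 0)
            + (if x = e' then ((-k : ℤ) : WithTop ℤ) else 0)) := by
      intro x
      by_cases h1 : x = e
      · subst h1; simp [hne]
      · by_cases h2 : x = e'
        · subst h2; simp [h1]
        · simp [h1, h2]
    rw [Finset.sum_congr rfl (fun x _ => hpt x), Finset.sum_add_distrib,
      Finset.sum_add_distrib, Finset.sum_ite_eq' Finset.univ e,
      Finset.sum_ite_eq' Finset.univ e', if_pos (Finset.mem_univ e),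
      if_pos (Finset.mem_univ e'), ← WithTop.coe_add, add_neg_cancel,
      WithTop.coe_zero, add_zero]

lemma equiv_sum (hns : ∀ v : G.V, ¬ G.IsSaddle v) {f f' : G.E → WithTop ℤ}
    (h : G.FramingEquiv f f') : ∑ e, f e = ∑ e, f' e := by
  induction h with
  | refl => rfl
  | tail _ hstep ih => rw [ih, (step_sum hns hstep).symm]

lemma main_aux (hconn : G.Connected) (hns : ∀ v : G.V, ¬ G.IsSaddle v) (e₀ : G.E) :
    ∀ n (f f' : G.E → ℤ),
      (Finset.univ.filter (fun e => e ≠ e₀ ∧ f e ≠ f' e)).card ≤ n →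
      ∑ e, f e = ∑ e, f' e →
      G.FramingEquiv (fun e => (f e : WithTop ℤ)) (fun e => (f' e : WithTop ℤ)) := by
  intro n
  induction n with
  | zero =>
    intro f f' hcard hsum
    have hag : ∀ e, e ≠ e₀ → f e = f' e := by
      intro e he
      by_contra hne
      have hmem : e ∈ Finset.univ.filter (fun e => e ≠ e₀ ∧ f e ≠ f' e) := by
        simp [he, hne]
      have := Finset.card_pos.mpr ⟨e, hmem⟩
      omega
    have e1 : f e₀ + ∑ e ∈ Finset.univ.erase e₀, f e = ∑ e, f e :=
      Finset.add_sum_erase _ f (Finset.mem_univ e₀)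
    have e2 : f' e₀ + ∑ e ∈ Finset.univ.erase e₀, f' e = ∑ e, f' e :=
      Finset.add_sum_erase _ f' (Finset.mem_univ e₀)
    have e3 : ∑ e ∈ Finset.univ.erase e₀, f e = ∑ e ∈ Finset.univ.erase e₀, f' e :=
      Finset.sum_congr rfl (fun x hx => hag x (Finset.ne_of_mem_erase hx))
    have h0 : f e₀ = f' e₀ := by omega
    have hff : f = f' := funext fun e => by
      by_cases he : e = e₀
      · exact he ▸ h0
      · exact hag e he
    rw [hff]
    exact Relation.ReflTransGen.refl
  | succ n ih =>
    intro f f' hcard hsum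
    by_cases hex : ∃ e₁, e₁ ≠ e₀ ∧ f e₁ ≠ f' e₁
    · obtain ⟨e₁, h1, h2⟩ := hex
      set k := f' e₁ - f e₁ with hk
      set g : G.E → ℤ := fun x => if x = e₁ then f x + k else if x = e₀ then f x + (-k) else f x
        with hg
      have hge₁ : g e₁ = f' e₁ := by simp [hg, hk]
      have hgoff : ∀ x, x ≠ e₁ → x ≠ e₀ → g x = f x := by
        intro x hx1 hx0; simp [hg, hx1, hx0]
      have hgcoe : (fun e => (g e : WithTop ℤ)) = G.Tr e₁ e₀ k (fun e => (f e : WithTop ℤ)) := by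
        funext x
        simp only [Tr, hg]
        split_ifs <;> push_cast <;> ring
      have step1 : G.FramingEquiv (fun e => (f e : WithTop ℤ)) (fun e => (g e : WithTop ℤ)) := by
        rw [hgcoe]
        have := equiv_T hns (edge_conn hconn e₁ e₀) k (fun e => (f e : WithTop ℤ))
        rwa [T, if_neg h1] at this
      have hsumg : ∑ e, g e = ∑ e, f' e := by
        rw [← hsum]
        have hpt : ∀ x : G.E, g x = f x + ((if x = e₁ then k else 0) + (if x = e₀ then -k else 0)) := by
          intro x
          simp only [hg]
          split_ifs with hx1 hx0 hx0 <;> first | (exact absurd (hx1.symm.trans hx0) h1) | ring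
        rw [Finset.sum_congr rfl (fun x _ => hpt x), Finset.sum_add_distrib,
          Finset.sum_add_distrib, Finset.sum_ite_eq' Finset.univ e₁,
          Finset.sum_ite_eq' Finset.univ e₀, if_pos (Finset.mem_univ e₁),
          if_pos (Finset.mem_univ e₀)]
        ring
      have hmem₁ : e₁ ∈ Finset.univ.filter (fun e => e ≠ e₀ ∧ f e ≠ f' e) := by simp [h1, h2]
      have hsub : Finset.univ.filter (fun e => e ≠ e₀ ∧ g e ≠ f' e)
          ⊆ (Finset.univ.filter (fun e => e ≠ e₀ ∧ f e ≠ f' e)).erase e₁ := by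
        intro x hx
        simp only [Finset.mem_filter, Finset.mem_erase, Finset.mem_univ, true_and] at hx ⊢
        obtain ⟨hx0, hxne⟩ := hx
        have hx1 : x ≠ e₁ := by
          rintro rfl; exact hxne hge₁
        exact ⟨hx1, hx0, fun hfx => hxne ((hgoff x hx1 hx0).trans hfx)⟩
      have hcard' : (Finset.univ.filter (fun e => e ≠ e₀ ∧ g e ≠ f' e)).card ≤ n := by
        have hc1 := Finset.card_le_card hsub
        rw [Finset.card_erase_of_mem hmem₁] at hc1
        have hc2 := Finset.card_pos.mpr ⟨e₁, hmem₁⟩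
        omega
      exact step1.trans (ih g f' hcard' hsumg)
    · push_neg at hex
      refine ih f f' ?_ hsum
      have : Finset.univ.filter (fun e => e ≠ e₀ ∧ f e ≠ f' e) = ∅ := by
        refine Finset.filter_eq_empty_iff.mpr ?_
        rintro x - ⟨hx0, hxne⟩
        exact hxne (hex x hx0)
      rw [this]
      simp

end MSGraph

/-- Two integer framings of a connected MS-graph without saddles are equivalent iff the
sums of the framings of all edges coincide. -/
theorem framingEquiv_iff_sum_eq_of_no_saddles (G : MSGraph) (hMS : G.IsMS)
    (hconn : G.Connected) (hns : ∀ v : G.V, ¬ G.IsSaddle v) (f f' : G.E → ℤ) :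
    G.FramingEquiv (fun e => (f e : WithTop ℤ)) (fun e => (f' e : WithTop ℤ)) ↔
      ∑ e : G.E, f e = ∑ e : G.E, f' e := by
  constructor
  · intro h
    have := MSGraph.equiv_sum hns h
    exact_mod_cast this
  · intro hsum
    by_cases hE : Nonempty G.E
    · obtain ⟨e₀⟩ := hE
      exact MSGraph.main_aux hconn hns e₀ _ f f' le_rfl hsum
    · have : (fun e => (f e : WithTop ℤ)) = fun e => (f' e : WithTop ℤ) :=
        funext fun e => absurd ⟨e⟩ hE
      rw [this]
      exact Relation.ReflTransGen.refl
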